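/- arXiv:1901.03825 — 4 statements merged into one kernel-verified Lean document; each statement's English description precedes it below -/
import Mathlib

section
/- Let B be a balanced convex compact subset of a Fréchet space E that contains a subset which is not projectively pluripolar in E, and let (P_n)_{n≥1} be a sequence of scalar-valued continuous homogeneous polynomials on E, where P_n has degree k_n ≤ n. If the set {z ∈ E_B : sup_{n≥1} (1/n)·log|P_n(z)| < ∞} has non-empty interior in E, then the family ((1/n)·log|P_n|)_{n≥1} is locally uniformly bounded from above on E. -/
/-!
By Baire's theorem, the closed sets `{z | ∀ n ≥ 1, ‖P n z‖ ≤ exp (n * C)}` cannot all have empty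
interior, since their union contains a nonempty open set; so one of them contains `w + U` with `U`
a balanced neighbourhood of `0`. Averaging `ω ^ j * P n (w + ω ^ j • u)` over the `(k n + 1)`-th
roots of unity `ω ^ j` recovers `P n u` (a discrete Cauchy estimate), so the same bound holds on
`U`. Finally `U` is absorbent, and homogeneity with `k n ≤ n` turns `z ∈ c • U`, `1 ≤ ‖c‖`, into
the bound with `C` replaced by `C + log ‖c‖`.
-/

open Set Filter Metric

/-- Extended-real logarithm: `-∞` for `t ≤ 0`. -/
noncomputable def elog (t : ℝ) : EReal := if t ≤ 0 then ⊥ else ((Real.log t : ℝ) : EReal)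

/-- An upper semicontinuous `u : ℂ → EReal` is subharmonic on `s` if it satisfies the
comparison principle with real parts of complex polynomials on closed discs in `s`. -/
def SubharmonicOn (u : ℂ → EReal) (s : Set ℂ) : Prop :=
  UpperSemicontinuousOn u s ∧
  ∀ (c : ℂ) (r : ℝ), 0 < r → Metric.closedBall c r ⊆ s →
    ∀ p : Polynomial ℂ,
      (∀ w ∈ Metric.sphere c r, u w ≤ (((p.eval w).re : ℝ) : EReal)) →
      ∀ w ∈ Metric.closedBall c r, u w ≤ (((p.eval w).re : ℝ) : EReal)

variable (E : Type*) [AddCommGroup E] [Module ℂ E] [TopologicalSpace E]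

/-- Plurisubharmonic on a domain `D` in a complex topological vector space. -/
def PlurisubharmonicOn (φ : E → EReal) (D : Set E) : Prop :=
  UpperSemicontinuousOn φ D ∧ (∀ z ∈ D, φ z ≠ ⊤) ∧
  ∀ a ∈ D, ∀ b : E, SubharmonicOn (fun w : ℂ => φ (a + w • b)) {w : ℂ | a + w • b ∈ D}

/-- Homogeneous plurisubharmonic: `φ(λ•z) = log |λ| + φ(z)`. -/
def HomogPSH (φ : E → EReal) : Prop :=
  PlurisubharmonicOn E φ Set.univ ∧
  ∀ (c : ℂ) (z : E), φ (c • z) = elog ‖c‖ + φ z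

/-- `A` is projectively pluripolar in `E`. -/
def ProjPluripolar (A : Set E) : Prop :=
  ∃ φ : E → EReal, HomogPSH E φ ∧ (∃ z, φ z ≠ ⊥) ∧ ∀ z ∈ A, φ z = ⊥

/-- `S` is pluripolar in the domain `D`. -/
def Pluripolar (D S : Set E) : Prop :=
  ∃ φ : E → EReal, PlurisubharmonicOn E φ D ∧ (∃ z ∈ D, φ z ≠ ⊥) ∧ ∀ z ∈ S, φ z = ⊥

variable (F : Type*) [AddCommGroup F] [Module ℂ F] [TopologicalSpace F]

/-- `P` is a continuous homogeneous polynomial of degree `k`. -/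
def IsContHomogPoly (k : ℕ) (P : E → F) : Prop :=
  ∃ M : ContinuousMultilinearMap ℂ (fun _ : Fin k => E) F, ∀ z, P z = M (fun _ => z)

section SpanDefs

variable {E : Type*} [AddCommGroup E] [Module ℝ E] [Module ℂ E] [IsScalarTower ℝ ℂ E]
  [TopologicalSpace E]

/-- Upper semicontinuity on the linear hull `E_B` of `B` with respect to the gauge-norm
`‖·‖_B = gauge B` topology of `E_B`. -/
def GaugeUSCOnSpan (B : Set E) (φ : E → EReal) : Prop :=
  ∀ z₀ ∈ (Submodule.span ℂ B : Set E), ∀ y : EReal, φ z₀ < y →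
    ∃ δ : ℝ, 0 < δ ∧ ∀ z ∈ (Submodule.span ℂ B : Set E), gauge B (z - z₀) < δ → φ z < y

/-- `φ` is homogeneous plurisubharmonic on the normed space `E_B`
(the linear hull of `B` with the Minkowski gauge norm of `B`). -/
def HomogPSHOnSpan (B : Set E) (φ : E → EReal) : Prop :=
  GaugeUSCOnSpan B φ ∧
  (∀ z ∈ (Submodule.span ℂ B : Set E), φ z ≠ ⊤) ∧
  (∀ a ∈ (Submodule.span ℂ B : Set E), ∀ b ∈ (Submodule.span ℂ B : Set E),
    SubharmonicOn (fun w : ℂ => φ (a + w • b)) Set.univ) ∧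
  ∀ (c : ℂ), ∀ z ∈ (Submodule.span ℂ B : Set E), φ (c • z) = elog ‖c‖ + φ z

/-- `A` is projectively pluripolar in the normed space `E_B`. -/
def ProjPluripolarInSpan (B A : Set E) : Prop :=
  ∃ φ : E → EReal, HomogPSHOnSpan B φ ∧
    (∃ z ∈ (Submodule.span ℂ B : Set E), φ z ≠ ⊥) ∧ ∀ z ∈ A, φ z = ⊥

end SpanDefs

open Finset in
theorem IsPrimitiveRoot.sum_pow_mul_pow_eq {R : Type*} [CommRing R] [IsDomain R] {ω : R}
    {N e : ℕ} (hω : IsPrimitiveRoot ω N) (he : e < N) :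
    ∑ j ∈ range N, ω ^ j * (ω ^ j) ^ e = if e + 1 = N then (N : R) else 0 := by
  have hterm : ∀ j, ω ^ j * (ω ^ j) ^ e = (ω ^ (e + 1)) ^ j := fun j => by ring
  simp only [hterm]
  split_ifs with hN
  · simp [← hN, hN ▸ hω.pow_eq_one]
  · have hne : ω ^ (e + 1) ≠ 1 := hω.pow_ne_one_of_pos_of_lt e.succ_ne_zero (by omega)
    have hgeom := geom_sum_mul (ω ^ (e + 1)) N
    rw [pow_right_comm, hω.pow_eq_one, one_pow, sub_self] at hgeom
    exact (mul_eq_zero.mp hgeom).resolve_right (sub_ne_zero.mpr hne)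

namespace MultilinearMap

theorem map_diag_add_smul {R ι E F : Type*} [CommSemiring R] [AddCommMonoid E] [Module R E]
    [AddCommMonoid F] [Module R F] [DecidableEq ι] [Fintype ι]
    (f : MultilinearMap R (fun _ : ι => E) F) (w u : E) (c : R) :
    f (fun _ => w + c • u) =
      ∑ s : Finset ι, c ^ s.card • f (s.piecewise (fun _ => u) (fun _ => w)) := by
  have hsplit : (fun _ : ι => w + c • u) = (fun _ => c • u) + (fun _ => w) := by
    funext; exact add_comm _ _
  rw [hsplit, f.map_add_univ]
  refine Finset.sum_congr rfl fun s _ => ?_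
  rw [← Finset.prod_const, ← f.map_piecewise_smul]
  congr 1
  funext i
  by_cases hi : i ∈ s <;> simp [hi]

theorem natCast_succ_smul_map_diag_eq_sum {R E F : Type*} [CommRing R] [IsDomain R]
    [AddCommGroup E] [Module R E] [AddCommGroup F] [Module R F] {k : ℕ}
    (f : MultilinearMap R (fun _ : Fin k => E) F) {ω : R} (hω : IsPrimitiveRoot ω (k + 1))
    (w u : E) :
    ((k + 1 : ℕ) : R) • f (fun _ => u) =
      ∑ j ∈ Finset.range (k + 1), ω ^ j • f (fun _ => w + ω ^ j • u) := by
  classical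
  set b : Finset (Fin k) → F := fun s => f (s.piecewise (fun _ => u) (fun _ => w))
  have hcoeff : ∀ s : Finset (Fin k), ∑ j ∈ Finset.range (k + 1), ω ^ j * (ω ^ j) ^ s.card =
      if s = Finset.univ then ((k + 1 : ℕ) : R) else 0 := fun s => by
    rw [hω.sum_pow_mul_pow_eq (Nat.lt_succ_of_le (s.card_le_univ.trans_eq (Fintype.card_fin k)))]
    simp only [add_left_inj, ← Finset.card_eq_iff_eq_univ, Fintype.card_fin]
  symm
  calc ∑ j ∈ Finset.range (k + 1), ω ^ j • f (fun _ => w + ω ^ j • u)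
      = ∑ s : Finset (Fin k), (∑ j ∈ Finset.range (k + 1), ω ^ j * (ω ^ j) ^ s.card) • b s := by
        simp only [f.map_diag_add_smul, Finset.smul_sum, smul_smul, Finset.sum_smul]
        exact Finset.sum_comm
    _ = ((k + 1 : ℕ) : R) • f (fun _ => u) := by
        simp [hcoeff, b, Finset.piecewise_univ]

theorem norm_map_diag_le_of_forall_norm_eq_one {E F : Type*} [AddCommGroup E]
    [Module ℂ E] [SeminormedAddCommGroup F] [NormedSpace ℂ F] {k : ℕ}
    (f : MultilinearMap ℂ (fun _ : Fin k => E) F) {w u : E} {R : ℝ}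
    (h : ∀ c : ℂ, ‖c‖ = 1 → ‖f (fun _ => w + c • u)‖ ≤ R) :
    ‖f (fun _ => u)‖ ≤ R := by
  obtain ⟨ω, hω⟩ : ∃ ω : ℂ, IsPrimitiveRoot ω (k + 1) :=
    ⟨_, Complex.isPrimitiveRoot_exp _ k.succ_ne_zero⟩
  have hnorm : ∀ j : ℕ, ‖ω ^ j‖ = 1 := fun j => by
    rw [norm_pow, hω.norm'_eq_one k.succ_ne_zero, one_pow]
  have hmul : ((k + 1 : ℕ) : ℝ) * ‖f (fun _ => u)‖ ≤ ((k + 1 : ℕ) : ℝ) * R :=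
    calc ((k + 1 : ℕ) : ℝ) * ‖f (fun _ => u)‖
        = ‖((k + 1 : ℕ) : ℂ) • f (fun _ => u)‖ := by rw [norm_smul, Complex.norm_natCast]
      _ = ‖∑ j ∈ Finset.range (k + 1), ω ^ j • f (fun _ => w + ω ^ j • u)‖ := by
          rw [f.natCast_succ_smul_map_diag_eq_sum hω w u]
      _ ≤ ∑ j ∈ Finset.range (k + 1), ‖ω ^ j • f (fun _ => w + ω ^ j • u)‖ := norm_sum_le _ _
      _ ≤ ∑ _j ∈ Finset.range (k + 1), R := Finset.sum_le_sum fun j _ => by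
          rw [norm_smul, hnorm, one_mul]
          exact h _ (hnorm j)
      _ = ((k + 1 : ℕ) : ℝ) * R := by rw [Finset.sum_const, Finset.card_range, nsmul_eq_mul]
  exact le_of_mul_le_mul_left hmul (by positivity)

end MultilinearMap

namespace IsContHomogPoly

variable {E F : Type*} [AddCommGroup E] [Module ℂ E] [TopologicalSpace E] {k : ℕ} {P : E → F}

theorem continuous [AddCommGroup F] [Module ℂ F] [TopologicalSpace F]
    (hP : IsContHomogPoly E F k P) : Continuous P := by
  obtain ⟨M, hM⟩ := hP
  rw [funext hM]
  exact M.cont.comp (continuous_pi fun _ => continuous_id)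

theorem map_smul [AddCommGroup F] [Module ℂ F] [TopologicalSpace F]
    (hP : IsContHomogPoly E F k P) (c : ℂ) (z : E) : P (c • z) = c ^ k • P z := by
  obtain ⟨M, hM⟩ := hP
  simpa [hM] using M.map_smul_univ (fun _ => c) (fun _ => z)

theorem norm_le_of_forall_norm_eq_one [SeminormedAddCommGroup F] [NormedSpace ℂ F]
    (hP : IsContHomogPoly E F k P) {w u : E} {R : ℝ}
    (h : ∀ c : ℂ, ‖c‖ = 1 → ‖P (w + c • u)‖ ≤ R) : ‖P u‖ ≤ R := by
  obtain ⟨M, hM⟩ := hP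
  simp only [hM] at h ⊢
  exact M.toMultilinearMap.norm_map_diag_le_of_forall_norm_eq_one h

end IsContHomogPoly

theorem exists_nonempty_interior_of_subset_iUnion_isClosed {X : Type*} [TopologicalSpace X]
    [BaireSpace X] {U : Set X} (hU : IsOpen U) (hne : U.Nonempty) {f : ℕ → Set X}
    (hf : ∀ n, IsClosed (f n)) (hsub : U ⊆ ⋃ n, f n) : ∃ n, (interior (f n)).Nonempty := by
  by_contra! h
  refine not_isMeagre_of_isOpen hU hne (IsMeagre.mono hsub (isMeagre_iUnion fun n => ?_))
  exact ((hf n).isNowhereDense_iff.2 (h n)).isMeagre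

section ExpGrowth

variable {E F : Type*} [SeminormedAddCommGroup F]

def expGrowthSet (P : ℕ → E → F) (C : ℝ) : Set E :=
  {z | ∀ n, 1 ≤ n → ‖P n z‖ ≤ Real.exp (n * C)}

theorem expGrowthSet_mono (P : ℕ → E → F) : Monotone (expGrowthSet P) :=
  fun _ _ hC _ hz n hn => (hz n hn).trans (Real.exp_le_exp.2 (by gcongr))

theorem isClosed_expGrowthSet [TopologicalSpace E] {P : ℕ → E → F}
    (hP : ∀ n, 1 ≤ n → Continuous (P n)) (C : ℝ) :
    IsClosed (expGrowthSet P C) := by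
  simp only [expGrowthSet, Set.ofPred_forall]
  exact isClosed_iInter fun n => isClosed_iInter fun hn =>
    isClosed_le (hP n hn).norm continuous_const

theorem exists_interior_expGrowthSet_nonempty [TopologicalSpace E] [BaireSpace E]
    {P : ℕ → E → F} (hP : ∀ n, 1 ≤ n → Continuous (P n))
    (h : (interior {z | ∃ C, z ∈ expGrowthSet P C}).Nonempty) :
    ∃ C : ℝ, (interior (expGrowthSet P C)).Nonempty := by
  obtain ⟨m, hm⟩ : ∃ m : ℕ, (interior (expGrowthSet P m)).Nonempty :=
    exists_nonempty_interior_of_subset_iUnion_isClosed isOpen_interior h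
      (fun m => isClosed_expGrowthSet hP m) fun z hz => by
        obtain ⟨C, hC⟩ := interior_subset hz
        obtain ⟨m, hm⟩ := exists_nat_ge C
        exact mem_iUnion.2 ⟨m, expGrowthSet_mono P hm hC⟩
  exact ⟨m, hm⟩

end ExpGrowth

section HomogeneousFamily

open Topology Pointwise

variable {E F : Type*} [AddCommGroup E] [Module ℂ E] [TopologicalSpace E]
  [SeminormedAddCommGroup F] [NormedSpace ℂ F] {P : ℕ → E → F} {k : ℕ → ℕ} {C : ℝ}

theorem expGrowthSet_mem_nhds_zero [IsTopologicalAddGroup E] [ContinuousSMul ℂ E]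
    (hP : ∀ n, 1 ≤ n → IsContHomogPoly E F (k n) (P n)) {w : E}
    (hw : expGrowthSet P C ∈ 𝓝 w) : expGrowthSet P C ∈ 𝓝 0 := by
  have hpre : (w + ·) ⁻¹' expGrowthSet P C ∈ 𝓝 0 :=
    (continuous_const_add w).tendsto' 0 w (add_zero w) hw
  obtain ⟨U, ⟨hU, hUbal⟩, hUsub⟩ := (nhds_basis_balanced ℂ E).mem_iff.1 hpre
  exact mem_of_superset hU fun u hu n hn =>
    (hP n hn).norm_le_of_forall_norm_eq_one fun c hc => hUsub (hUbal.smul_mem hc.le hu) n hn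

theorem smul_expGrowthSet_subset (hdeg : ∀ n, 1 ≤ n → k n ≤ n)
    (hP : ∀ n, 1 ≤ n → IsContHomogPoly E F (k n) (P n)) {c : ℂ} (hc : 1 ≤ ‖c‖) :
    c • expGrowthSet P C ⊆ expGrowthSet P (C + Real.log ‖c‖) := by
  rintro _ ⟨z, hz, rfl⟩ n hn
  rw [(hP n hn).map_smul, norm_smul, norm_pow]
  calc ‖c‖ ^ k n * ‖P n z‖ ≤ ‖c‖ ^ n * Real.exp (n * C) :=
        mul_le_mul (pow_le_pow_right₀ hc (hdeg n hn)) (hz n hn) (norm_nonneg _) (by positivity)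
    _ = Real.exp (n * (C + Real.log ‖c‖)) := by
        rw [mul_add, Real.exp_add, Real.exp_nat_mul (Real.log _), Real.exp_log (by linarith),
          mul_comm]

theorem exists_expGrowthSet_mem_nhds [ContinuousSMul ℂ E] (hdeg : ∀ n, 1 ≤ n → k n ≤ n)
    (hP : ∀ n, 1 ≤ n → IsContHomogPoly E F (k n) (P n)) (h0 : expGrowthSet P C ∈ 𝓝 0)
    (z₀ : E) : ∃ C', expGrowthSet P C' ∈ 𝓝 z₀ := by
  obtain ⟨c, hz₀, hc⟩ := ((absorbent_nhds_zero (interior_mem_nhds.2 h0) z₀).and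
    (eventually_cobounded_le_norm (E := ℂ) 1)).exists
  have hc0 : c ≠ 0 := norm_pos_iff.1 (by linarith)
  exact ⟨_, mem_of_superset ((isOpen_interior.smul₀ hc0).mem_nhds (singleton_subset_iff.1 hz₀))
    ((smul_set_mono interior_subset).trans (smul_expGrowthSet_subset hdeg hP hc))⟩

end HomogeneousFamily

theorem statement3_general
    {E : Type*} [AddCommGroup E] [Module ℂ E]
    [UniformSpace E] [IsUniformAddGroup E] [ContinuousSMul ℂ E]
    [CompleteSpace E] [TopologicalSpace.MetrizableSpace E]
    (B : Set E)
    (P : ℕ → E → ℂ) (k : ℕ → ℕ)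
    (hdeg : ∀ n, 1 ≤ n → k n ≤ n)
    (hP : ∀ n, 1 ≤ n → IsContHomogPoly E ℂ (k n) (P n))
    (hint : (interior {z ∈ (Submodule.span ℂ B : Set E) |
        ∃ C : ℝ, ∀ n, 1 ≤ n → ‖P n z‖ ≤ Real.exp (n * C)}).Nonempty) :
    ∀ z₀ : E, ∃ U ∈ nhds z₀, ∃ C : ℝ,
      ∀ z ∈ U, ∀ n, 1 ≤ n → ‖P n z‖ ≤ Real.exp (n * C) := by
  -- together with completeness, this makes `E` completely metrizable, hence a Baire space
  have := IsUniformAddGroup.uniformity_countably_generated (α := E)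
  obtain ⟨m, w, hw⟩ := exists_interior_expGrowthSet_nonempty (fun n hn => (hP n hn).continuous)
    (hint.mono (interior_mono fun z hz => hz.2))
  have h0 := expGrowthSet_mem_nhds_zero hP (mem_interior_iff_mem_nhds.1 hw)
  intro z₀
  obtain ⟨C, hC⟩ := exists_expGrowthSet_mem_nhds hdeg hP h0 z₀
  exact ⟨_, hC, C, fun z hz => hz⟩

/-- if the set where `sup_n (1/n) log |P_n|` is finite on `E_B` has nonempty
interior in `E`, the family `((1/n) log |P_n|)_n` is locally uniformly bounded from above
on `E`. -/
theorem statement3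
    {E : Type*} [AddCommGroup E] [Module ℝ E] [Module ℂ E] [IsScalarTower ℝ ℂ E]
    [UniformSpace E] [IsUniformAddGroup E] [ContinuousSMul ℂ E] [LocallyConvexSpace ℝ E]
    [CompleteSpace E] [TopologicalSpace.MetrizableSpace E]
    (B : Set E) (hBcompact : IsCompact B) (hBbal : Balanced ℂ B) (hBconv : Convex ℝ B)
    (hBbig : ∃ A : Set E, A ⊆ B ∧ ¬ ProjPluripolar E A)
    (P : ℕ → E → ℂ) (k : ℕ → ℕ)
    (hdeg : ∀ n, 1 ≤ n → k n ≤ n)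
    (hP : ∀ n, 1 ≤ n → IsContHomogPoly E ℂ (k n) (P n))
    (hint : (interior {z ∈ (Submodule.span ℂ B : Set E) |
        ∃ C : ℝ, ∀ n, 1 ≤ n → ‖P n z‖ ≤ Real.exp (n * C)}).Nonempty) :
    ∀ z₀ : E, ∃ U ∈ nhds z₀, ∃ C : ℝ,
      ∀ z ∈ U, ∀ n, 1 ≤ n → ‖P n z‖ ≤ Real.exp (n * C) :=
  statement3_general B P k hdeg hP hint
end

section
/- Let D be a domain (nonempty open connected set) in a Fréchet space E, let F be a barrelled locally convex space, let f : D → F be holomorphic, and let G be a closed linear subspace of F. If the set D₀ = {z ∈ D : f(z) ∈ G} is not rare in D (i.e. the closure of D₀ has nonempty interior in D), then f(z) ∈ G for all z ∈ D. -/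
/-!
Fix a continuous functional `ψ` vanishing on `G`. Along every complex line through a point `a`
near which `f` is `G`-valued, `ψ ∘ f` is holomorphic and vanishes near `a`, so by the
one-variable identity theorem it vanishes on the whole real segment from `a` that stays in `D`.
By Hahn–Banach, `f` is therefore `G`-valued on every convex neighbourhood in `D` of a point of
the closure of `A = interior {z ∈ D | f z ∈ G}`; thus `A` is relatively closed in `D`. It is open
and, by continuity of `f` and closedness of `G`, it contains the nonempty set
`interior (closure {z ∈ D | f z ∈ G}) ∩ D`, so `A = D` by connectedness.
-/

open Set Filter

/-- Holomorphy for maps between complex topological vector spaces: continuity together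
with holomorphy of all scalarizations along complex lines, near each point of `D`. -/
def HolomorphicOn' {X G : Type*} [AddCommGroup X] [Module ℂ X] [TopologicalSpace X]
    [AddCommGroup G] [Module ℂ G] [TopologicalSpace G]
    (f : X → G) (D : Set X) : Prop :=
  ContinuousOn f D ∧
  ∀ a ∈ D, ∀ b : X, ∀ φ : G →L[ℂ] ℂ,
    ∃ U ∈ nhds (0 : ℂ), U ⊆ {t : ℂ | a + t • b ∈ D} ∧
      DifferentiableOn ℂ (fun t : ℂ => φ (f (a + t • b))) U

open Topology

theorem ContinuousOn.closure_sep_inter_subset {X Y : Type*} [TopologicalSpace X]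
    [TopologicalSpace Y] {f : X → Y} {D : Set X} {T : Set Y} (hf : ContinuousOn f D)
    (hT : IsClosed T) : closure {z ∈ D | f z ∈ T} ∩ D ⊆ {z ∈ D | f z ∈ T} := by
  rintro z ⟨hzS, hzD⟩
  have hfz : f z ∈ closure (f '' {z ∈ D | f z ∈ T}) :=
    ((hf z hzD).mono fun _ hy => hy.1).mem_closure_image hzS
  refine ⟨hzD, hT.closure_subset_iff.2 ?_ hfz⟩
  rintro _ ⟨y, hy, rfl⟩
  exact hy.2

theorem Submodule.exists_strongDual_forall_mem_eq_zero_of_notMem {𝕜 F : Type*} [RCLike 𝕜]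
    [AddCommGroup F] [Module ℝ F] [Module 𝕜 F] [IsScalarTower ℝ 𝕜 F] [TopologicalSpace F]
    [IsTopologicalAddGroup F] [ContinuousSMul 𝕜 F] [LocallyConvexSpace ℝ F]
    (G : Submodule 𝕜 F) (hG : IsClosed (G : Set F)) {x : F} (hx : x ∉ G) :
    ∃ ψ : StrongDual 𝕜 F, (∀ g ∈ G, ψ g = 0) ∧ ψ x ≠ 0 := by
  obtain ⟨ψ, u, hGu, hux⟩ :=
    RCLike.geometric_hahn_banach_closed_point (𝕜 := 𝕜) (G.restrictScalars ℝ).convex hG hx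
  have hu : 0 < u := by simpa using hGu 0 G.zero_mem
  refine ⟨ψ, fun g hg => ?_, fun hψx => by simp [hψx] at hux; linarith⟩
  by_contra hψg
  -- Otherwise `G` contains a multiple of `g` on which `ψ` takes the value `u + 1`.
  have hscaled := hGu _ (G.smul_mem (((u + 1 : ℝ) : 𝕜) * (ψ g)⁻¹) hg)
  rw [map_smul, smul_eq_mul, mul_assoc, inv_mul_cancel₀ hψg, mul_one, RCLike.ofReal_re] at hscaled
  linarith

namespace HolomorphicOn'

variable {E F : Type*} [AddCommGroup E] [Module ℂ E] [TopologicalSpace E] [ContinuousAdd E]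
  [ContinuousSMul ℂ E] [AddCommGroup F] [Module ℂ F] [TopologicalSpace F]
  {f : E → F} {D : Set E}

theorem analyticOnNhd_line (hf : HolomorphicOn' f D) (hD : IsOpen D) (ψ : F →L[ℂ] ℂ)
    (a b : E) : AnalyticOnNhd ℂ (fun t : ℂ => ψ (f (a + t • b))) {t | a + t • b ∈ D} := by
  refine DifferentiableOn.analyticOnNhd (fun t ht => ?_)
    (hD.preimage (continuous_const.add (continuous_id.smul continuous_const)))
  obtain ⟨U, hU, -, hdiffU⟩ := hf.2 (a + t • b) ht b ψ
  have hdiff : DifferentiableAt ℂ (fun s : ℂ => ψ (f (a + t • b + s • b))) (t - t) := by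
    simpa using hdiffU.differentiableAt hU
  have hline : (fun s : ℂ => ψ (f (a + s • b))) =
      fun s : ℂ => ψ (f (a + t • b + (s - t) • b)) := by
    funext s
    rw [sub_smul, add_add_sub_cancel]
  rw [hline]
  exact (differentiableAt_comp_sub_const.2 hdiff).differentiableWithinAt

variable [Module ℝ E] [IsScalarTower ℝ ℂ E]

theorem apply_eq_zero_of_segment_subset (hf : HolomorphicOn' f D) (hD : IsOpen D)
    (ψ : F →L[ℂ] ℂ) {a w : E} (hseg : segment ℝ a w ⊆ D)
    (ha : ∀ᶠ z in 𝓝 a, ψ (f z) = 0) : ψ (f w) = 0 := by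
  set U : Set ℂ := Complex.ofReal '' Icc 0 1
  have hUD : U ⊆ {t : ℂ | a + t • (w - a) ∈ D} := by
    rintro _ ⟨θ, hθ, rfl⟩
    have hθ' : (θ : ℂ) • (w - a) = θ • (w - a) := by
      simpa using algebraMap_smul ℂ θ (w - a)
    show a + (θ : ℂ) • (w - a) ∈ D
    rw [hθ']
    exact hseg (by rw [segment_eq_image']; exact ⟨θ, hθ, rfl⟩)
  have hU : IsPreconnected U :=
    isPreconnected_Icc.image _ Complex.continuous_ofReal.continuousOn
  have h0U : (0 : ℂ) ∈ U := ⟨0, left_mem_Icc.2 zero_le_one, Complex.ofReal_zero⟩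
  have h1U : (1 : ℂ) ∈ U := ⟨1, right_mem_Icc.2 zero_le_one, Complex.ofReal_one⟩
  have hline : Tendsto (fun t : ℂ => a + t • (w - a)) (𝓝 0) (𝓝 a) := by
    have hcont : Continuous fun t : ℂ => a + t • (w - a) := by fun_prop
    exact hcont.tendsto' 0 a (by simp)
  have hzero : (fun t : ℂ => ψ (f (a + t • (w - a)))) =ᶠ[𝓝 0] 0 := hline.eventually ha
  simpa using ((hf.analyticOnNhd_line hD ψ a (w - a)).mono hUD
    ).eqOn_zero_of_preconnected_of_eventuallyEq_zero hU h0U hzero h1U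

variable [Module ℝ F] [IsScalarTower ℝ ℂ F] [IsTopologicalAddGroup F] [ContinuousSMul ℂ F]
  [LocallyConvexSpace ℝ F] {G : Submodule ℂ F}

theorem mem_of_segment_subset (hf : HolomorphicOn' f D) (hD : IsOpen D)
    (hG : IsClosed (G : Set F)) {a w : E} (hseg : segment ℝ a w ⊆ D)
    (ha : ∀ᶠ z in 𝓝 a, f z ∈ G) : f w ∈ G := by
  by_contra hw
  obtain ⟨ψ, hψG, hψw⟩ := G.exists_strongDual_forall_mem_eq_zero_of_notMem hG hw
  exact hψw (hf.apply_eq_zero_of_segment_subset hD ψ hseg (ha.mono fun z hz => hψG _ hz))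

theorem closure_interior_inter_subset [LocallyConvexSpace ℝ E] (hf : HolomorphicOn' f D)
    (hD : IsOpen D) (hG : IsClosed (G : Set F)) :
    closure (interior {z ∈ D | f z ∈ G}) ∩ D ⊆ interior {z ∈ D | f z ∈ G} := by
  rintro z ⟨hzA, hzD⟩
  obtain ⟨V, ⟨hVz, hVconv⟩, hVD⟩ :=
    (LocallyConvexSpace.convex_basis (𝕜 := ℝ) z).mem_iff.1 (hD.mem_nhds hzD)
  obtain ⟨a, haV, haA⟩ := mem_closure_iff_nhds.1 hzA V hVz
  have haG : ∀ᶠ y in 𝓝 a, f y ∈ G :=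
    mem_of_superset (isOpen_interior.mem_nhds haA) fun y hy => (interior_subset hy).2
  refine mem_interior_iff_mem_nhds.2 (mem_of_superset hVz fun w hw => ⟨hVD hw, ?_⟩)
  exact hf.mem_of_segment_subset hD hG ((hVconv.segment_subset haV hw).trans hVD) haG

end HolomorphicOn'

theorem statement10_general
    {E : Type*} [AddCommGroup E] [Module ℝ E] [Module ℂ E] [IsScalarTower ℝ ℂ E]
    [UniformSpace E] [IsUniformAddGroup E] [ContinuousSMul ℂ E] [LocallyConvexSpace ℝ E]
    {F : Type*} [AddCommGroup F] [Module ℝ F] [Module ℂ F] [IsScalarTower ℝ ℂ F]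
    [TopologicalSpace F] [IsTopologicalAddGroup F] [ContinuousSMul ℂ F]
    [LocallyConvexSpace ℝ F]
    (D : Set E) (hDopen : IsOpen D) (hDconn : IsPreconnected D)
    (f : E → F) (hf : HolomorphicOn' f D)
    (G : Submodule ℂ F) (hG : IsClosed (G : Set F))
    (hnotrare : (interior (closure {z ∈ D | f z ∈ G}) ∩ D).Nonempty) :
    ∀ z ∈ D, f z ∈ G := by
  set S : Set E := {z ∈ D | f z ∈ G}
  have hS : closure S ∩ D ⊆ S := hf.1.closure_sep_inter_subset hG
  obtain ⟨x, hx⟩ := hnotrare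
  have hxS : x ∈ interior S :=
    interior_maximal (fun y hy => hS ⟨interior_subset hy.1, hy.2⟩)
      (isOpen_interior.inter hDopen) hx
  have hDS : D ⊆ interior S := hDconn.subset_of_closure_inter_subset isOpen_interior
    ⟨x, hx.2, hxS⟩ (hf.closure_interior_inter_subset hDopen hG)
  exact fun z hz => (interior_subset (hDS hz)).2

/-- identity-type theorem.  If a holomorphic map from a domain `D` in a
Fréchet space into a barrelled locally convex space takes values in a closed subspace `G`
on a non-rare subset of `D`, then it takes values in `G` everywhere on `D`. -/
theorem statement10
    {E : Type*} [AddCommGroup E] [Module ℝ E] [Module ℂ E] [IsScalarTower ℝ ℂ E]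
    [UniformSpace E] [IsUniformAddGroup E] [ContinuousSMul ℂ E] [LocallyConvexSpace ℝ E]
    [CompleteSpace E] [TopologicalSpace.MetrizableSpace E]
    {F : Type*} [AddCommGroup F] [Module ℝ F] [Module ℂ F] [IsScalarTower ℝ ℂ F]
    [TopologicalSpace F] [IsTopologicalAddGroup F] [ContinuousSMul ℂ F]
    [LocallyConvexSpace ℝ F]
    -- `F` is barrelled: every barrel is a neighbourhood of `0`
    (hbarrelled : ∀ S : Set F, IsClosed S → Convex ℝ S → Balanced ℂ S →
      Absorbent ℂ S → S ∈ nhds (0 : F))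
    (D : Set E) (hDopen : IsOpen D) (hDne : D.Nonempty) (hDconn : IsPreconnected D)
    (f : E → F) (hf : HolomorphicOn' f D)
    (G : Submodule ℂ F) (hG : IsClosed (G : Set F))
    (hnotrare : (interior (closure {z ∈ D | f z ∈ G}) ∩ D).Nonempty) :
    ∀ z ∈ D, f z ∈ G :=
  statement10_general D hDopen hDconn f hf G hG hnotrare
end

section
/- Let E be a Fréchet space and let B be a compact balanced convex subset of E that is not pluripolar in E. Then the boundary ∂B of B is not projectively pluripolar in E. -/
/-!
A homogeneous plurisubharmonic `φ` satisfies `φ 0 = -∞` and, for `c ≠ 0`, `φ (c • z) = -∞`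
exactly when `φ z = -∞`, because `log ‖c‖` is finite. A compact set `B` is bounded, so for
`z ∈ B \ {0}` the ray `t ↦ t • z`, `t ≥ 1`, starts in `B` and eventually leaves it, hence
meets `∂B`. Thus `φ = -∞` on `∂B` forces `φ = -∞` on `B`, and `B` would be pluripolar.
-/

open Set Filter Metric

variable (E : Type*) [AddCommGroup E] [Module ℂ E] [TopologicalSpace E]

variable (F : Type*) [AddCommGroup F] [Module ℂ F] [TopologicalSpace F]

theorem Bornology.IsVonNBounded.exists_smul_notMem {𝕜 E : Type*} [NormedField 𝕜]
    [AddCommGroup E] [Module 𝕜 E] [TopologicalSpace E] [T1Space E] {B : Set E}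
    (hB : Bornology.IsVonNBounded 𝕜 B) {z : E} (hz : z ≠ 0) :
    ∃ r, ∀ c : 𝕜, r ≤ ‖c‖ → c • z ∉ B := by
  obtain ⟨r, hr⟩ := absorbs_iff_norm.1 <|
    hB (isOpen_compl_singleton.mem_nhds (Ne.symm hz : (0 : E) ≠ z))
  refine ⟨max r 1, fun c hc hcz => ?_⟩
  have hc0 : c ≠ 0 := norm_pos_iff.1 (one_pos.trans_le (le_of_max_le_right hc))
  obtain ⟨w, hw, hwz⟩ := hr c (le_of_max_le_left hc) hcz
  exact hw (smul_right_injective E hc0 hwz)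

theorem Bornology.IsVonNBounded.exists_smul_mem_frontier {𝕜 E : Type*} [RCLike 𝕜]
    [AddCommGroup E] [Module 𝕜 E] [TopologicalSpace E] [T1Space E] [ContinuousSMul 𝕜 E]
    {B : Set E} (hB : Bornology.IsVonNBounded 𝕜 B) {z : E} (hzB : z ∈ B) (hz : z ≠ 0) :
    ∃ t : ℝ, 1 ≤ t ∧ (t : 𝕜) • z ∈ frontier B := by
  let ray : Ici (1 : ℝ) → E := fun t => ((t : ℝ) : 𝕜) • z
  have hray : Continuous ray := by fun_prop
  have : PreconnectedSpace (Ici (1 : ℝ)) := Subtype.preconnectedSpace isPreconnected_Ici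
  obtain ⟨r, hr⟩ := hB.exists_smul_notMem hz
  have hfrontier : (frontier (ray ⁻¹' B)).Nonempty := by
    refine nonempty_frontier_iff.2
      ⟨⟨⟨1, mem_Ici.2 le_rfl⟩, by simpa [ray] using hzB⟩, fun huniv => ?_⟩
    let t : Ici (1 : ℝ) := ⟨max r 1, mem_Ici.2 (le_max_right _ _)⟩
    refine hr ((t : ℝ) : 𝕜) ?_ (huniv.symm ▸ mem_univ t : t ∈ ray ⁻¹' B)
    simp [t, abs_of_pos (one_pos.trans_le (le_max_right r 1))]
  obtain ⟨t, ht⟩ := hfrontier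
  exact ⟨t, t.2, hray.frontier_preimage_subset B ht⟩

theorem elog_of_pos {t : ℝ} (ht : 0 < t) : elog t = (Real.log t : EReal) := by
  simp [elog, not_le.2 ht]

namespace HomogPSH

variable {E : Type*} [AddCommGroup E] [Module ℂ E] [TopologicalSpace E] {φ : E → EReal}

theorem apply_zero (hφ : HomogPSH E φ) : φ 0 = ⊥ := by
  simpa [elog] using hφ.2 0 0

theorem apply_smul_eq_bot_iff (hφ : HomogPSH E φ) {c : ℂ} (hc : c ≠ 0) (z : E) :
    φ (c • z) = ⊥ ↔ φ z = ⊥ := by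
  rw [hφ.2, elog_of_pos (norm_pos_iff.2 hc), EReal.add_eq_bot_iff]
  simp

theorem eq_bot_of_eq_bot_on_frontier [T1Space E] [ContinuousSMul ℂ E] (hφ : HomogPSH E φ)
    {B : Set E} (hB : Bornology.IsVonNBounded ℂ B) (hφB : ∀ z ∈ frontier B, φ z = ⊥) :
    ∀ z ∈ B, φ z = ⊥ := by
  intro z hzB
  rcases eq_or_ne z 0 with rfl | hz
  · exact hφ.apply_zero
  obtain ⟨t, ht, htz⟩ := hB.exists_smul_mem_frontier hzB hz
  have htne : (t : ℂ) ≠ 0 := by exact_mod_cast (one_pos.trans_le ht).ne'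
  exact (hφ.apply_smul_eq_bot_iff htne z).1 (hφB _ htz)

end HomogPSH

theorem statement14_general
    {E : Type*} [AddCommGroup E] [Module ℂ E]
    [UniformSpace E] [IsUniformAddGroup E] [ContinuousSMul ℂ E]
    [TopologicalSpace.MetrizableSpace E]
    (B : Set E) (hBcompact : IsCompact B)
    (hBnotpolar : ¬ Pluripolar E Set.univ B) :
    ¬ ProjPluripolar E (frontier B) := by
  rintro ⟨φ, hφ, ⟨z, hz⟩, hφfrontier⟩
  exact hBnotpolar ⟨φ, hφ.1, ⟨z, mem_univ z, hz⟩,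
    hφ.eq_bot_of_eq_bot_on_frontier (hBcompact.isVonNBounded ℂ) hφfrontier⟩

/-- Example 2.2: if `B` is a compact balanced convex non-pluripolar subset
of a Fréchet space `E`, then the boundary `∂B` is not projectively pluripolar in `E`. -/
theorem statement14
    {E : Type*} [AddCommGroup E] [Module ℝ E] [Module ℂ E] [IsScalarTower ℝ ℂ E]
    [UniformSpace E] [IsUniformAddGroup E] [ContinuousSMul ℂ E] [LocallyConvexSpace ℝ E]
    [CompleteSpace E] [TopologicalSpace.MetrizableSpace E]
    (B : Set E) (hBcompact : IsCompact B) (hBbal : Balanced ℂ B) (hBconv : Convex ℝ B)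
    (hBnotpolar : ¬ Pluripolar E Set.univ B) :
    ¬ ProjPluripolar E (frontier B) :=
  statement14_general B hBcompact hBnotpolar
end

section
/- Let E be a Fréchet space and let B be a balanced convex compact subset of E containing a subset that is not projectively pluripolar in E. Then the linear span E_B of B is dense in E. -/
/-!
If `E_B` is not dense, Hahn–Banach yields a nonzero continuous functional `f` vanishing on
`E_B`. Then `log |f|` is homogeneous plurisubharmonic (on every complex line it is the log-modulus
of an affine function) and equals `-∞` on `B`, so every subset of `B` is projectively pluripolar.
-/

open Set Filter Metric

variable (E : Type*) [AddCommGroup E] [Module ℂ E] [TopologicalSpace E]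

variable (F : Type*) [AddCommGroup F] [Module ℂ F] [TopologicalSpace F]

theorem elog_eq_log_ofReal (t : ℝ) : elog t = ENNReal.log (ENNReal.ofReal t) :=
  (ENNReal.log_ofReal t).symm

theorem continuous_elog : Continuous elog :=
  (ENNReal.continuous_log.comp ENNReal.continuous_ofReal).congr fun t =>
    (elog_eq_log_ofReal t).symm

theorem elog_ne_top (t : ℝ) : elog t ≠ ⊤ := by
  rw [elog_eq_log_ofReal, Ne, ENNReal.log_eq_top_iff]
  exact ENNReal.ofReal_ne_top

theorem elog_eq_bot_iff {t : ℝ} : elog t = ⊥ ↔ t ≤ 0 := by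
  rw [elog_eq_log_ofReal, ENNReal.log_eq_bot_iff, ENNReal.ofReal_eq_zero]

theorem elog_mul {s t : ℝ} (hs : 0 ≤ s) : elog (s * t) = elog s + elog t := by
  rw [elog_eq_log_ofReal, ENNReal.ofReal_mul hs, ENNReal.log_mul_add, ← elog_eq_log_ofReal,
    ← elog_eq_log_ofReal]

theorem elog_le_coe_iff {r t : ℝ} : elog t ≤ (r : EReal) ↔ t ≤ Real.exp r := by
  unfold elog
  split_ifs with ht
  · simpa using ht.trans (Real.exp_pos r).le
  · rw [EReal.coe_le_coe_iff]
    exact Real.log_le_iff_le_exp (not_le.mp ht)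

/-- Maximum modulus principle applied to `g * exp (-q)`. -/
theorem norm_le_exp_re_of_forall_mem_sphere {g q : ℂ → ℂ} {c : ℂ} {r : ℝ} (hr : 0 < r)
    (hg : DifferentiableOn ℂ g (closedBall c r)) (hq : DifferentiableOn ℂ q (closedBall c r))
    (h : ∀ z ∈ sphere c r, ‖g z‖ ≤ Real.exp (q z).re) :
    ∀ z ∈ closedBall c r, ‖g z‖ ≤ Real.exp (q z).re := by
  have hnorm : ∀ z, ‖g z * Complex.exp (-q z)‖ ≤ 1 ↔ ‖g z‖ ≤ Real.exp (q z).re := fun z => by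
    rw [norm_mul, Complex.norm_exp, Complex.neg_re, Real.exp_neg, ← div_eq_mul_inv,
      div_le_one (Real.exp_pos _)]
  intro z hz
  rw [← hnorm]
  rw [← closure_ball c hr.ne'] at hg hq hz
  refine Complex.norm_le_of_forall_mem_frontier_norm_le isBounded_ball
    (hg.mul hq.neg.cexp).diffContOnCl (fun w hw => (hnorm w).mpr (h w ?_)) hz
  rwa [frontier_ball c hr.ne'] at hw

theorem subharmonicOn_elog_norm {g : ℂ → ℂ} {s : Set ℂ} (hg : DifferentiableOn ℂ g s) :
    SubharmonicOn (fun w => elog ‖g w‖) s := by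
  refine ⟨(continuous_elog.comp_continuousOn hg.continuousOn.norm).upperSemicontinuousOn,
    fun c r hr hball p hp => ?_⟩
  simp only [elog_le_coe_iff] at hp ⊢
  exact norm_le_exp_re_of_forall_mem_sphere hr (hg.mono hball)
    p.differentiable.differentiableOn hp

theorem homogPSH_elog_norm {E : Type*} [AddCommGroup E] [Module ℂ E] [TopologicalSpace E]
    (f : StrongDual ℂ E) : HomogPSH E (fun z => elog ‖f z‖) := by
  refine ⟨⟨(continuous_elog.comp f.continuous.norm).upperSemicontinuous.upperSemicontinuousOn _,
    fun z _ => elog_ne_top _, fun a _ b => ?_⟩, fun c z => ?_⟩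
  · simp only [map_add, map_smul, smul_eq_mul]
    exact subharmonicOn_elog_norm (by fun_prop)
  · simp only [map_smul, smul_eq_mul, norm_mul]
    exact elog_mul (norm_nonneg c)

theorem projPluripolar_of_forall_eq_zero {E : Type*} [AddCommGroup E] [Module ℂ E]
    [TopologicalSpace E] {A : Set E} (f : StrongDual ℂ E) (hf : f ≠ 0)
    (hA : ∀ z ∈ A, f z = 0) : ProjPluripolar E A := by
  obtain ⟨x, hx⟩ := DFunLike.ne_iff.mp hf
  refine ⟨_, homogPSH_elog_norm f, ⟨x, ?_⟩, fun z hz => ?_⟩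
  · simpa [elog_eq_bot_iff] using hx
  · simp [elog_eq_bot_iff, hA z hz]

theorem Submodule.exists_strongDual_eq_zero_of_notMem {𝕜 E : Type*} [RCLike 𝕜]
    [AddCommGroup E] [TopologicalSpace E] [IsTopologicalAddGroup E] [Module ℝ E] [Module 𝕜 E]
    [IsScalarTower ℝ 𝕜 E] [ContinuousSMul 𝕜 E] [LocallyConvexSpace ℝ E]
    {p : Submodule 𝕜 E} (hp : IsClosed (p : Set E)) {x : E} (hx : x ∉ p) :
    ∃ f : StrongDual 𝕜 E, (∀ y ∈ p, f y = 0) ∧ f x ≠ 0 := by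
  obtain ⟨f, u, hfp, hfx⟩ :=
    RCLike.geometric_hahn_banach_closed_point (𝕜 := 𝕜) (p.restrictScalars ℝ).convex hp hx
  -- `re ∘ f` is bounded above on `p`, so it vanishes there: test it on `(u / ‖f y‖²) conj (f y) y`.
  have hf0 : ∀ y ∈ p, f y = 0 := by
    intro y hy
    by_contra hfy
    have hpos : 0 < ‖f y‖ ^ 2 := by positivity
    have := hfp _ (p.smul_mem (((u / ‖f y‖ ^ 2 : ℝ) : 𝕜) * starRingEnd 𝕜 (f y)) hy)
    rw [map_smul, smul_eq_mul, mul_assoc, RCLike.conj_mul, ← RCLike.ofReal_pow,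
      ← RCLike.ofReal_mul, RCLike.ofReal_re, div_mul_cancel₀ _ hpos.ne'] at this
    exact this.false
  refine ⟨f, hf0, fun hfx0 => ?_⟩
  have := hfp 0 p.zero_mem
  simp only [map_zero, hfx0] at this hfx
  linarith

theorem statement16_general
    {E : Type*} [AddCommGroup E] [Module ℝ E] [Module ℂ E] [IsScalarTower ℝ ℂ E]
    [UniformSpace E] [IsUniformAddGroup E] [ContinuousSMul ℂ E] [LocallyConvexSpace ℝ E]
    (B : Set E)
    (hBbig : ∃ A : Set E, A ⊆ B ∧ ¬ ProjPluripolar E A) :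
    Dense (Submodule.span ℂ B : Set E) := by
  obtain ⟨A, hAB, hA⟩ := hBbig
  intro x
  by_contra hx
  rw [← Submodule.topologicalClosure_coe] at hx
  obtain ⟨f, hf0, hfx⟩ := Submodule.exists_strongDual_eq_zero_of_notMem
    (Submodule.span ℂ B).isClosed_topologicalClosure hx
  refine hA (projPluripolar_of_forall_eq_zero f (fun hf => hfx (by simp [hf])) fun z hz => ?_)
  exact hf0 z ((Submodule.span ℂ B).le_topologicalClosure (Submodule.subset_span (hAB hz)))

/-- if a balanced convex compact subset `B` of a Fréchet space contains a
subset which is not projectively pluripolar in `E`, then the linear hull `E_B` of `B` is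
dense in `E`. -/
theorem statement16
    {E : Type*} [AddCommGroup E] [Module ℝ E] [Module ℂ E] [IsScalarTower ℝ ℂ E]
    [UniformSpace E] [IsUniformAddGroup E] [ContinuousSMul ℂ E] [LocallyConvexSpace ℝ E]
    [CompleteSpace E] [TopologicalSpace.MetrizableSpace E]
    (B : Set E) (hBcompact : IsCompact B) (hBbal : Balanced ℂ B) (hBconv : Convex ℝ B)
    (hBbig : ∃ A : Set E, A ⊆ B ∧ ¬ ProjPluripolar E A) :
    Dense (Submodule.span ℂ B : Set E) :=
  statement16_general B hBbig
end
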